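/- arXiv:1202.3303 — 2 statements merged into one kernel-verified Lean document; each statement's English description precedes it below -/
import Mathlib

section
/- Let M be a finite simple matroid on n elements with girth d* (and d* ≤ n, i.e., M has at least one circuit). Then the number of flats of M of rank d* − 1 is strictly smaller than the binomial coefficient C(n, d* − 1). -/
open Matroid Polynomial Finset
open scoped Classical

namespace PaperMatroid

variable {α : Type*}

/-- The rank of a finset in a matroid on a finite type: the maximum size of an
independent subset. -/
noncomputable def mrk [Fintype α] (M : Matroid α) (x : Finset α) : ℕ :=
  (x.powerset.filter (fun (I : Finset α) => M.Indep (I : Set α))).sup Finset.card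

/-- A circuit of a matroid: a minimal dependent set. -/
def IsCircuit (M : Matroid α) (C : Set α) : Prop :=
  M.Dep C ∧ ∀ ⦃D⦄, D ⊂ C → M.Indep D

/-- The girth of a matroid: the minimum size of a circuit. -/
noncomputable def girth (M : Matroid α) : ℕ :=
  sInf {n | ∃ C, IsCircuit M C ∧ C.ncard = n}

/-- The cogirth of a matroid: the girth of the dual matroid, i.e. the minimum
size of a cocircuit. -/
noncomputable def cogirth (M : Matroid α) : ℕ := girth M✶

/-- The finset of (finsets corresponding to) flats of a matroid on a finite type. -/
noncomputable def flats [Fintype α] (M : Matroid α) : Finset (Finset α) :=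
  Finset.univ.filter fun F => M.IsFlat ↑F

/-- The Möbius function of the lattice of flats of a matroid:
`μ(X,X) = 1`, `μ(X,Y) = -Σ_{X ⊆ Z ⊊ Y, Z a flat} μ(X,Z)` for `X ⊊ Y`, and `0` otherwise. -/
noncomputable def mob [Fintype α] (M : Matroid α) (X Y : Finset α) : ℤ :=
  if X = Y then 1
  else if X ⊆ Y then
    -∑ Z ∈ ((flats M).filter fun Z => X ⊆ Z ∧ Z ⊂ Y).attach, mob M X Z.1
  else 0
termination_by Y.card
decreasing_by
  · have hZ := Z.2
    simp only [Finset.mem_filter] at hZ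
    exact Finset.card_lt_card hZ.2.2

/-- The Möbius polynomial of a matroid, as a polynomial in `S` (the outer
variable) whose coefficients are polynomials in `T` (the inner variable):
`μ_M(S,T) = Σ_{x ∈ L} Σ_{x ⊆ y ∈ L} μ(x,y) S^{r(x)} T^{k - r(y)}`,
where `L` is the lattice of flats and `k` is the rank of `M`. -/
noncomputable def mobiusPoly [Fintype α] (M : Matroid α) : Polynomial (Polynomial ℤ) :=
  ∑ x ∈ flats M, ∑ y ∈ (flats M).filter (fun y => x ⊆ y),
    mob M x y • (Polynomial.X ^ (mrk M x) *
      Polynomial.C (Polynomial.X ^ (mrk M Finset.univ - mrk M y)))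

/-- The coboundary polynomial of a matroid, as a polynomial in `S` (the outer
variable) whose coefficients are polynomials in `T` (the inner variable):
`χ_M(S,T) = Σ_{x ∈ L} Σ_{x ⊆ y ∈ L} μ(x,y) S^{|x|} T^{k - r(y)}`,
where `L` is the lattice of flats, `|x|` is the number of ground-set elements
of the flat `x`, and `k` is the rank of `M`. -/
noncomputable def cobPoly [Fintype α] (M : Matroid α) : Polynomial (Polynomial ℤ) :=
  ∑ x ∈ flats M, ∑ y ∈ (flats M).filter (fun y => x ⊆ y),
    mob M x y • (Polynomial.X ^ x.card *
      Polynomial.C (Polynomial.X ^ (mrk M Finset.univ - mrk M y)))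

/-!
Every flat of rank `k` is the closure of a `k`-subset (a basis of it), so closure maps the
`k`-subsets onto the flats of rank `k`. This map is not injective when there is a circuit of size
`k + 1 ≥ 2`: deleting either of two of its elements leaves a set with the circuit's closure. With
`k = d* - 1`, a smallest circuit supplies this.
-/

lemma isCircuit_iff_isCircuit {M : Matroid α} {C : Set α} : IsCircuit M C ↔ M.IsCircuit C :=
  Matroid.isCircuit_iff_forall_ssubset.symm

lemma exists_isCircuit_ncard_eq_girth {M : Matroid α} (h : girth M ≠ 0) :
    ∃ C, M.IsCircuit C ∧ C.ncard = girth M := by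
  have hne : {n | ∃ C, IsCircuit M C ∧ C.ncard = n}.Nonempty := by
    by_contra hemp
    exact h (by rw [girth, Set.not_nonempty_iff_eq_empty.1 hemp, Nat.sInf_empty])
  obtain ⟨C, hC, hCcard⟩ := Nat.sInf_mem hne
  exact ⟨C, isCircuit_iff_isCircuit.1 hC, hCcard⟩

lemma exists_isBasis_card_eq_mrk [Fintype α] (M : Matroid α) {X : Finset α}
    (hX : ↑X ⊆ M.E) : ∃ I : Finset α, M.IsBasis ↑I ↑X ∧ I.card = mrk M X := by
  obtain ⟨I, hImem, hImax⟩ := Finset.exists_mem_eq_sup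
    (X.powerset.filter fun I : Finset α => M.Indep ↑I) ⟨∅, by simp⟩ Finset.card
  rw [mem_filter, mem_powerset] at hImem
  refine ⟨I, hImem.2.isBasis_of_forall_insert (by exact_mod_cast hImem.1) ?_, hImax.symm⟩
  rintro e ⟨heX, heI⟩
  refine ⟨fun hins => ?_, Set.insert_subset (hX heX) hImem.2.subset_ground⟩
  have hle : (insert e I).card ≤ mrk M X :=
    le_sup (f := Finset.card)
      (mem_filter.2 ⟨mem_powerset.2 (insert_subset heX hImem.1), by simpa⟩)
  rw [card_insert_of_notMem (by exact_mod_cast heI), mrk, hImax] at hle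
  omega

lemma exists_card_eq_mrk_closure_eq_of_isFlat [Fintype α] {M : Matroid α} {F : Finset α}
    (hF : M.IsFlat ↑F) : ∃ I : Finset α, I.card = mrk M F ∧ M.closure ↑I = ↑F := by
  obtain ⟨I, hIF, hIcard⟩ := exists_isBasis_card_eq_mrk M hF.subset_ground
  exact ⟨I, hIcard, by rw [hIF.closure_eq_closure, hF.closure]⟩

lemma card_flats_mrk_eq_lt_choose [Fintype α] {M : Matroid α} {C : Set α} {k : ℕ}
    (hC : M.IsCircuit C) (hCk : C.ncard = k + 1) (hk : 0 < k) :
    ((flats M).filter fun F => mrk M F = k).card < (Fintype.card α).choose k := by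
  set closureFinset : Finset α → Finset α := fun B => (M.closure ↑B).toFinset
  have hcover : (flats M).filter (fun F => mrk M F = k) ⊆
      (powersetCard k univ).image closureFinset := by
    intro F hF
    simp only [flats, mem_filter, mem_univ, true_and] at hF
    obtain ⟨I, hIcard, hIF⟩ := exists_card_eq_mrk_closure_eq_of_isFlat hF.1
    exact mem_image.2 ⟨I, mem_powersetCard.2 ⟨subset_univ I, hIcard.trans hF.2⟩,
      by simp [closureFinset, hIF]⟩
  have hnotInj :
      ¬ Set.InjOn closureFinset (powersetCard k (univ : Finset α) : Set (Finset α)) := by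
    obtain ⟨x, hx, y, hy, hxy⟩ := (Set.one_lt_ncard C.toFinite).1 (by omega)
    have hmem : ∀ e ∈ C, (C \ {e}).toFinset ∈ powersetCard k univ := fun e he => by
      rw [mem_powersetCard, ← Set.ncard_eq_toFinset_card', Set.ncard_sdiff_singleton_of_mem he]
      exact ⟨subset_univ _, by omega⟩
    intro hinj
    have hsame : C \ {x} = C \ {y} :=
      Set.toFinset_inj.1 <| hinj (mem_coe.2 (hmem x hx)) (mem_coe.2 (hmem y hy)) (by
        simp only [closureFinset, Set.coe_toFinset, hC.closure_sdiff_singleton_eq])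
    have hyx : y ∈ C \ {x} := ⟨hy, Ne.symm hxy⟩
    exact (hsame ▸ hyx).2 rfl
  calc ((flats M).filter fun F => mrk M F = k).card
      ≤ ((powersetCard k univ).image closureFinset).card := card_le_card hcover
    _ < (powersetCard k univ).card :=
      lt_of_le_of_ne card_image_le (mt card_image_iff.1 hnotInj)
    _ = (Fintype.card α).choose k := by rw [card_powersetCard, card_univ]

theorem card_flats_girth_sub_one_lt_general {α : Type*} [Fintype α] (M : Matroid α)
    (n : ℕ) (hn : n = Fintype.card α)
    (hsimple : 2 < girth M) :
    ((flats M).filter fun F => mrk M F = girth M - 1).card <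
      n.choose (girth M - 1) := by
  obtain ⟨C, hC, hCcard⟩ := exists_isCircuit_ncard_eq_girth (M := M) (by omega)
  exact hn ▸ card_flats_mrk_eq_lt_choose hC (by omega) (by omega)

/-- In a finite simple matroid `M` on `n` elements with girth
`d* ≤ n` (so `M` has a circuit), the number of flats of rank `d* - 1` is
strictly smaller than `C(n, d* - 1)`. -/
theorem card_flats_girth_sub_one_lt {α : Type*} [Fintype α] (M : Matroid α)
    (hE : M.E = Set.univ) (n : ℕ) (hn : n = Fintype.card α)
    (hsimple : 2 < girth M) (hgirth : girth M ≤ n) :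
    ((flats M).filter fun F => mrk M F = girth M - 1).card <
      n.choose (girth M - 1) :=
  card_flats_girth_sub_one_lt_general M n hn hsimple

end PaperMatroid
end

section
/- Let M be a finite simple matroid of rank k on n elements with girth d* and cogirth d. Write the coboundary polynomial of M as χ_M(S,T) = Σ_{i=0}^n χ_i(T) S^i and the Möbius polynomial of M as μ_M(S,T) = Σ_{i=0}^k μ_i(T) S^i. Then: (1) χ_i(T) = μ_i(T) for all i < d* − 1; (2) χ_i(T) = 0 for all i with n − d < i < n; and (3) χ_n(T) = 1. -/
/-! Both polynomials collect, for each flat `x`, the same `T`-polynomial `χ_{M/x}(T)`, placed at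
`S^{|x|}` in `χ_M` and at `S^{r(x)}` in `μ_M`. A set smaller than the girth is independent, and a
dependent set contains a circuit, which forces its rank up to at least `d* - 1`; so for `i < d* - 1`
the flats with `|x| = i` are exactly those with `r(x) = i`. A proper flat is disjoint from some
cocircuit, so `|x| ≤ n - d`; the only flat with `n` elements is `E`, and `χ_{M/E} = 1`. -/

open Matroid Polynomial Finset
open scoped Classical

namespace PaperMatroid

variable {α : Type*}

section Rank

variable [Fintype α] {M : Matroid α}

lemma mrk_le_card (x : Finset α) : mrk M x ≤ x.card :=
  Finset.sup_le fun _ hI => card_le_card (mem_powerset.1 (mem_filter.1 hI).1)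

lemma card_le_mrk {I x : Finset α} (hIx : I ⊆ x) (hI : M.Indep ↑I) : I.card ≤ mrk M x :=
  le_sup (mem_filter.2 ⟨mem_powerset.2 hIx, hI⟩)

lemma mrk_eq_card_of_indep {x : Finset α} (hx : M.Indep ↑x) : mrk M x = x.card :=
  (mrk_le_card x).antisymm (card_le_mrk subset_rfl hx)

lemma ncard_le_mrk_add_one_of_isCircuit {C : Set α} {x : Finset α} (hC : M.IsCircuit C)
    (hCx : C ⊆ ↑x) : C.ncard ≤ mrk M x + 1 := by
  obtain ⟨c, hc⟩ := hC.nonempty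
  have hfin : (C \ {c}).Finite := hC.finite.sdiff
  have hcard : hfin.toFinset.card = C.ncard - 1 := by
    rw [← Set.ncard_eq_toFinset_card _ hfin, Set.ncard_sdiff_singleton_of_mem hc]
  have hle : hfin.toFinset.card ≤ mrk M x :=
    card_le_mrk (fun a ha => hCx ((Set.Finite.mem_toFinset _).1 ha).1)
      (by rw [Set.Finite.coe_toFinset]; exact hC.sdiff_singleton_indep hc)
  have hpos : 0 < C.ncard := (Set.ncard_pos hC.finite).2 ⟨c, hc⟩
  omega

end Rank

section Girth

variable {M : Matroid α}

lemma girth_le_ncard_of_isCircuit {C : Set α} (hC : M.IsCircuit C) : girth M ≤ C.ncard :=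
  Nat.sInf_le ⟨C, isCircuit_iff_forall_ssubset.1 hC, rfl⟩

lemma girth_le_mrk_add_one_of_not_indep [Fintype α] (hE : M.E = Set.univ) {x : Finset α}
    (hx : ¬M.Indep ↑x) : girth M ≤ mrk M x + 1 := by
  obtain ⟨C, hCx, hC⟩ := ((not_indep_iff (by simp [hE])).1 hx).exists_isCircuit_subset
  exact (girth_le_ncard_of_isCircuit hC).trans (ncard_le_mrk_add_one_of_isCircuit hC hCx)

lemma card_eq_iff_mrk_eq [Fintype α] (hE : M.E = Set.univ) {x : Finset α} {i : ℕ}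
    (hi : i < girth M - 1) : x.card = i ↔ mrk M x = i := by
  by_cases hx : M.Indep ↑x
  · rw [mrk_eq_card_of_indep hx]
  · have hg := girth_le_mrk_add_one_of_not_indep hE hx
    have hr := mrk_le_card (M := M) x
    omega

lemma _root_.Matroid.IsFlat.exists_isCocircuit_subset_compl {F : Set α} (hF : M.IsFlat F)
    (hFE : F ≠ M.E) :
    ∃ K, K ⊆ M.E \ F ∧ M.IsCocircuit K := by
  have hdep : M✶.Dep (M.E \ F) := by
    rw [← not_indep_iff (by simp)]
    intro hco
    have hcl := Coindep.closure_compl hco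
    rw [Set.sdiff_sdiff_cancel_left hF.subset_ground, hF.closure] at hcl
    exact hFE hcl
  exact hdep.exists_isCircuit_subset

lemma cogirth_add_card_le [Fintype α] (hE : M.E = Set.univ) {x : Finset α}
    (hx : M.IsFlat ↑x) (hne : x ≠ univ) : cogirth M + x.card ≤ Fintype.card α := by
  obtain ⟨K, hKx, hK⟩ := hx.exists_isCocircuit_subset_compl (by simpa [hE] using hne)
  have hle : K.ncard ≤ (univ \ x).card := by
    rw [← Set.ncard_coe_finset, coe_sdiff, coe_univ, ← hE]
    exact Set.ncard_le_ncard hKx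
  have hd : cogirth M ≤ K.ncard := girth_le_ncard_of_isCircuit hK
  rw [card_sdiff_of_subset (subset_univ x), card_univ] at hle
  have hxn := card_le_univ x
  omega

end Girth

section Coefficients

variable [Fintype α] {M : Matroid α}

/-- The characteristic polynomial of the contraction `M / x`, written through the flats
above `x`. -/
noncomputable def contractCharPoly (M : Matroid α) (x : Finset α) : ℤ[X] :=
  ∑ y ∈ (flats M).filter (fun y => x ⊆ y), mob M x y • X ^ (mrk M univ - mrk M y)

lemma coeff_sum_flats (a : Finset α → ℕ) (i : ℕ) :
    (∑ x ∈ flats M, ∑ y ∈ (flats M).filter (fun y => x ⊆ y),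
      mob M x y • ((X : ℤ[X][X]) ^ a x * C (X ^ (mrk M univ - mrk M y)))).coeff i =
    ∑ x ∈ (flats M).filter (fun x => a x = i), contractCharPoly M x := by
  simp_rw [← mul_smul_comm, smul_C, ← mul_sum, ← map_sum]
  rw [finsetSum_coeff, sum_filter]
  refine sum_congr rfl fun x _ => ?_
  rw [mul_comm, coeff_C_mul_X_pow, contractCharPoly]
  exact if_congr eq_comm rfl rfl

lemma coeff_cobPoly (i : ℕ) :
    (cobPoly M).coeff i = ∑ x ∈ (flats M).filter (fun x => x.card = i), contractCharPoly M x :=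
  coeff_sum_flats _ i

lemma coeff_mobiusPoly (i : ℕ) :
    (mobiusPoly M).coeff i = ∑ x ∈ (flats M).filter (fun x => mrk M x = i), contractCharPoly M x :=
  coeff_sum_flats _ i

lemma mob_self (x : Finset α) : mob M x x = 1 := by
  rw [mob, if_pos rfl]

lemma univ_mem_flats (hE : M.E = Set.univ) : univ ∈ flats M :=
  mem_filter.2 ⟨mem_univ _, by simpa [hE] using M.ground_isFlat⟩

lemma filter_flats_card_eq_card_univ (hE : M.E = Set.univ) :
    (flats M).filter (fun x => x.card = Fintype.card α) = {univ} := by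
  ext x
  simp only [mem_filter, card_eq_iff_eq_univ, mem_singleton]
  constructor
  · exact And.right
  · rintro rfl
    exact ⟨univ_mem_flats hE, rfl⟩

lemma contractCharPoly_univ (hE : M.E = Set.univ) : contractCharPoly M univ = 1 := by
  have hflats : (flats M).filter (fun y => univ ⊆ y) = {univ} := by
    simpa only [univ_subset_iff, ← card_eq_iff_eq_univ] using filter_flats_card_eq_card_univ hE
  rw [contractCharPoly, hflats, sum_singleton, mob_self, Nat.sub_self, pow_zero, one_smul]

end Coefficients

theorem cobPoly_coeffs_from_mobiusPoly_general {α : Type*} [Fintype α] (M : Matroid α)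
    (hE : M.E = Set.univ) (n : ℕ) (hn : n = Fintype.card α) :
    (∀ i : ℕ, i < girth M - 1 → (cobPoly M).coeff i = (mobiusPoly M).coeff i) ∧
    (∀ i : ℕ, n - cogirth M < i → i < n → (cobPoly M).coeff i = 0) ∧
    (cobPoly M).coeff n = 1 := by
  subst hn
  refine ⟨fun i hi => ?_, fun i hlo hhi => ?_, ?_⟩
  · rw [coeff_cobPoly, coeff_mobiusPoly]
    exact sum_congr (filter_congr fun x _ => card_eq_iff_mrk_eq hE hi) fun _ _ => rfl
  · rw [coeff_cobPoly]
    refine sum_eq_zero fun x hx => ?_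
    obtain ⟨hflat, hcard⟩ := mem_filter.1 hx
    have hne : x ≠ univ := by rintro rfl; rw [card_univ] at hcard; omega
    have := cogirth_add_card_le hE (mem_filter.1 hflat).2 hne
    omega
  · rw [coeff_cobPoly, filter_flats_card_eq_card_univ hE, sum_singleton, contractCharPoly_univ hE]

/-- For a finite simple matroid `M` of rank `k` on `n` elements
with girth `d*` and cogirth `d`, writing `χ_M(S,T) = Σ χ_i(T) S^i` and
`μ_M(S,T) = Σ μ_i(T) S^i`: (1) `χ_i(T) = μ_i(T)` for `i < d* - 1`;
(2) `χ_i(T) = 0` for `n - d < i < n`; (3) `χ_n(T) = 1`. -/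
theorem cobPoly_coeffs_from_mobiusPoly {α : Type*} [Fintype α] (M : Matroid α)
    (hE : M.E = Set.univ) (n k : ℕ) (hn : n = Fintype.card α)
    (hk : k = mrk M Finset.univ) (hsimple : 2 < girth M) :
    (∀ i : ℕ, i < girth M - 1 → (cobPoly M).coeff i = (mobiusPoly M).coeff i) ∧
    (∀ i : ℕ, n - cogirth M < i → i < n → (cobPoly M).coeff i = 0) ∧
    (cobPoly M).coeff n = 1 :=
  cobPoly_coeffs_from_mobiusPoly_general M hE n hn

end PaperMatroid
end
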